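/- Let M be a smooth manifold and ∇ a Koszul (affine) connection on M. Define the second covariant derivative of a vector field X by (∇²X)(Y,Z) = ∇_Y ∇_Z X − ∇_{∇_Y Z} X. If ξ and ξ* are vector fields with ∇²ξ = 0 and ∇²ξ* = 0, then the vector field ∇_ξ ξ* also satisfies ∇²(∇_ξ ξ*) = 0. Hence the space of solutions of the equation ∇²X = 0 is closed under the product X·Y := ∇_X Y. -/
import Mathlib

/-- For a Koszul connection `conn` on the space of vector fields `V`
(modelled as a real vector space with an ℝ-bilinear covariant derivative),
with second covariant derivative `D2 X Y Z = ∇_Y ∇_Z X − ∇_{∇_Y Z} X`,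
if `∇²ξ = 0` and `∇²ξ* = 0` then `∇²(∇_ξ ξ*) = 0`: the solution space of
`∇²X = 0` is closed under the product `X·Y = ∇_X Y`. -/
theorem solutions_closed_under_product
    {V : Type*} [AddCommGroup V] [Module ℝ V]
    (conn : V →ₗ[ℝ] V →ₗ[ℝ] V)
    (D2 : V → V → V → V)
    (hD2 : ∀ X Y Z, D2 X Y Z = conn Y (conn Z X) - conn (conn Y Z) X)
    (ξ ξs : V)
    (hξ : ∀ Y Z, D2 ξ Y Z = 0)
    (hξs : ∀ Y Z, D2 ξs Y Z = 0) :
    ∀ Y Z, D2 (conn ξ ξs) Y Z = 0 := by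
  have h : ∀ Y Z, conn Y (conn Z ξ) = conn (conn Y Z) ξ := fun Y Z =>
    sub_eq_zero.mp ((hD2 ξ Y Z).symm.trans (hξ Y Z))
  have hs : ∀ Y Z, conn Y (conn Z ξs) = conn (conn Y Z) ξs := fun Y Z =>
    sub_eq_zero.mp ((hD2 ξs Y Z).symm.trans (hξs Y Z))
  intro Y Z
  rw [hD2, sub_eq_zero, hs Z ξ, hs Y (conn Z ξ), h Y Z, hs (conn Y Z) ξ]
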